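/- The map Φ^(ν) : H → C([0,T]; ℝ^{d^ν}) is continuous with respect to the supremum norms: if γ_m ∈ H and γ_m → γ ∈ H uniformly on [0,T], then Φ^(ν)(γ_m) → Φ^(ν)(γ) uniformly on [0,T]. -/

import Mathlib

open MeasureTheory Filter Set
open scoped NNReal ENNReal

/-- The simplex `{u : 0 ≤ u 0 ≤ u 1 ≤ ⋯ ≤ u (ν-1) ≤ r}` in `ℝ^ν`. -/
def simplexSet (ν : ℕ) (r : ℝ) : Set (Fin ν → ℝ) :=
  {u | (∀ j, 0 ≤ u j) ∧ Monotone u ∧ ∀ j, u j ≤ r}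

/-- The iterated integral map `Φ^(ν)`, coordinatewise:
`(Φ^(ν)(γ)(s))_{i_1,…,i_ν} = ∫_{0 ≤ u_1 ≤ ⋯ ≤ u_ν ≤ s} γ̇_{i_1}(u_1) ⋯ γ̇_{i_ν}(u_ν) du`. -/
noncomputable def Phi (d ν : ℕ) (γ : ℝ → Fin d → ℝ) (s : ℝ) : (Fin ν → Fin d) → ℝ :=
  fun i => ∫ u in simplexSet ν s, ∏ j, deriv (fun v => γ v (i j)) (u j)

/-- Membership in `H`: paths `γ` with `γ(0) = 0` that are Lipschitz with constant 1
on `[0,T]`. -/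
def HPath (d : ℕ) (T : ℝ) (γ : ℝ → Fin d → ℝ) : Prop :=
  γ 0 = 0 ∧ LipschitzOnWith 1 γ (Set.Icc 0 T)

/-- Bounded measurable functions on finite-measure sets are integrable. -/
lemma integrableOn_of_bdd {f : ℝ → ℝ} {s : Set ℝ} (hs : volume s ≠ ⊤)
    (hm : AEStronglyMeasurable f (volume.restrict s)) {C : ℝ}
    (hb : ∀ᵐ x ∂(volume.restrict s), |f x| ≤ C) : IntegrableOn f s := by
  haveI : IsFiniteMeasure (volume.restrict s) :=
    ⟨by rw [Measure.restrict_apply_univ]; exact lt_top_iff_ne_top.2 hs⟩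
  exact Integrable.mono' (integrable_const C) hm (by simpa [Real.norm_eq_abs] using hb)

lemma monotone_integral_deriv_le {g : ℝ → ℝ} (hg : Monotone g) (hgc : Continuous g)
    {a b : ℝ} (hab : a ≤ b) :
    ∫ x in Set.Ioc a b, deriv g x ≤ g b - g a := by
  let S : StieltjesFunction ℝ := ⟨g, hg, fun x => hgc.continuousAt.continuousWithinAt⟩
  have hae : ∀ᵐ x, HasDerivAt g ((Measure.rnDeriv S.measure volume x).toReal) x :=
    S.ae_hasDerivAt
  have h1 : ∀ᵐ x, deriv g x = (Measure.rnDeriv S.measure volume x).toReal := by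
    filter_upwards [hae] with x hx using hx.deriv
  have h2 : ∫ x in Set.Ioc a b, deriv g x
      = ∫ x in Set.Ioc a b, (Measure.rnDeriv S.measure volume x).toReal :=
    integral_congr_ae (ae_restrict_of_ae h1)
  rw [h2]
  have hS : S.measure (Set.Ioc a b) ≠ ⊤ := by
    rw [S.measure_Ioc]; exact ENNReal.ofReal_ne_top
  refine le_trans (Measure.setIntegral_toReal_rnDeriv_le hS) ?_
  rw [measureReal_def, S.measure_Ioc, ENNReal.toReal_ofReal (sub_nonneg.2 (hg hab))]

lemma abs_deriv_le_of_lipschitz {f : ℝ → ℝ} {K : ℝ≥0} (hf : LipschitzWith K f) (x : ℝ) :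
    |deriv f x| ≤ K := by
  simpa [Real.norm_eq_abs] using norm_deriv_le_of_lipschitz (𝕜 := ℝ) (x₀ := x) hf

lemma integrableOn_deriv_of_lipschitz {f : ℝ → ℝ} {K : ℝ≥0} (hf : LipschitzWith K f)
    {a b : ℝ} : IntegrableOn (deriv f) (Set.Ioc a b) := by
  refine integrableOn_of_bdd (by simp [Real.volume_Ioc]) ?_ (C := K)
    (Filter.Eventually.of_forall fun x => abs_deriv_le_of_lipschitz hf x)
  exact (measurable_deriv f).aestronglyMeasurable

/-- Fundamental theorem of calculus for globally Lipschitz functions. -/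
lemma lipschitz_integral_deriv {f : ℝ → ℝ} {K : ℝ≥0} (hf : LipschitzWith K f)
    {a b : ℝ} (hab : a ≤ b) :
    ∫ x in Set.Ioc a b, deriv f x = f b - f a := by
  have hfc : Continuous f := hf.continuous
  have habs : ∀ x y, |f x - f y| ≤ K * |x - y| := by
    intro x y
    simpa [Real.dist_eq] using hf.dist_le_mul x y
  have hg1 : Monotone (fun x => K * x + f x) := by
    intro x y hxy
    have h2 : |f y - f x| ≤ K * (y - x) := by
      have h3 := habs y x
      rwa [abs_of_nonneg (sub_nonneg.2 hxy)] at h3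
    have h4 := abs_le.1 h2
    dsimp only
    nlinarith [h4.1, h4.2]
  have hg2 : Monotone (fun x => K * x - f x) := by
    intro x y hxy
    have h2 : |f y - f x| ≤ K * (y - x) := by
      have h3 := habs y x
      rwa [abs_of_nonneg (sub_nonneg.2 hxy)] at h3
    have h4 := abs_le.1 h2
    dsimp only
    nlinarith [h4.1, h4.2]
  have hc1 : Continuous (fun x : ℝ => K * x + f x) := by continuity
  have hc2 : Continuous (fun x : ℝ => K * x - f x) := by continuity
  have hder : ∀ᵐ x, DifferentiableAt ℝ f x := hf.ae_differentiableAt_of_real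
  have hd1 : ∀ᵐ x, deriv (fun x => (K : ℝ) * x + f x) x = K + deriv f x := by
    filter_upwards [hder] with x hx
    rw [deriv_fun_add (by fun_prop) hx, deriv_const_mul _ (by fun_prop), deriv_id'']
    ring
  have hd2 : ∀ᵐ x, deriv (fun x => (K : ℝ) * x - f x) x = K - deriv f x := by
    filter_upwards [hder] with x hx
    rw [deriv_fun_sub (by fun_prop) hx, deriv_const_mul _ (by fun_prop), deriv_id'']
    ring
  have hint : IntegrableOn (deriv f) (Set.Ioc a b) := integrableOn_deriv_of_lipschitz hf
  have hK : ∫ x in Set.Ioc a b, (K : ℝ) = K * (b - a) := by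
    simp [Real.volume_Ioc, ENNReal.toReal_ofReal (sub_nonneg.2 hab), mul_comm, max_eq_left (sub_nonneg.2 hab)]
  have e1 : ∫ x in Set.Ioc a b, deriv (fun x => (K : ℝ) * x + f x) x
      = K * (b - a) + ∫ x in Set.Ioc a b, deriv f x := by
    rw [integral_congr_ae (ae_restrict_of_ae hd1), integral_add (integrable_const _) hint, hK]
  have e2 : ∫ x in Set.Ioc a b, deriv (fun x => (K : ℝ) * x - f x) x
      = K * (b - a) - ∫ x in Set.Ioc a b, deriv f x := by
    rw [integral_congr_ae (ae_restrict_of_ae hd2), integral_sub (integrable_const _) hint, hK]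
  have i1 := monotone_integral_deriv_le hg1 hc1 hab
  have i2 := monotone_integral_deriv_le hg2 hc2 hab
  rw [e1] at i1; rw [e2] at i2
  have j1 : (K:ℝ) * (b - a) + ∫ x in Set.Ioc a b, deriv f x ≤ (K * b + f b) - (K * a + f a) := i1
  have j2 : (K:ℝ) * (b - a) - ∫ x in Set.Ioc a b, deriv f x ≤ (K * b - f b) - (K * a - f a) := i2
  linarith

/-- FTC for functions Lipschitz on an interval, integrating over a subinterval. -/
lemma lipschitzOn_integral_deriv {f : ℝ → ℝ} {K : ℝ≥0} {A B : ℝ}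
    (hf : LipschitzOnWith K f (Set.Icc A B)) {a b : ℝ}
    (hA : A ≤ a) (hab : a ≤ b) (hB : b ≤ B) :
    ∫ x in Set.Ioc a b, deriv f x = f b - f a := by
  obtain ⟨g, hg, hfg⟩ := hf.extend_real
  have hloc : ∀ x ∈ Set.Ioo A B, deriv f x = deriv g x := by
    intro x hx
    have hmem : Set.Ioo A B ∈ nhds x := Ioo_mem_nhds hx.1 hx.2
    exact Filter.EventuallyEq.deriv_eq
      (Filter.eventuallyEq_of_mem hmem fun y hy => hfg (Ioo_subset_Icc_self hy))
  have hae : ∀ᵐ x ∂(volume.restrict (Set.Ioc a b)), deriv f x = deriv g x := by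
    have hnull : volume (Set.Ioc a b \ Set.Ioo A B) = 0 := by
      refine measure_mono_null (fun x hx => ?_) (Real.volume_singleton (a := B))
      obtain ⟨⟨hx1, hx2⟩, hx3⟩ := hx
      have : ¬(A < x ∧ x < B) := hx3
      have hAx : A < x := lt_of_le_of_lt hA hx1
      have : ¬ x < B := fun h => this ⟨hAx, h⟩
      have : x = B := le_antisymm (le_trans hx2 hB) (not_lt.1 this)
      simp [this]
    rw [ae_restrict_iff' measurableSet_Ioc]
    refine (ae_iff.2 ?_)
    refine measure_mono_null (fun x hx => ?_) hnull
    simp only [mem_setOf_eq, not_forall] at hx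
    obtain ⟨hx1, hx2⟩ := hx
    exact ⟨hx1, fun hmem => hx2 (hloc x hmem)⟩
  rw [integral_congr_ae hae, lipschitz_integral_deriv hg hab,
    hfg (Set.mem_Icc.2 ⟨hA, le_trans hab hB⟩), hfg (Set.mem_Icc.2 ⟨le_trans hA hab, hB⟩)]

/-- Integration by parts for globally Lipschitz functions. -/
lemma lipschitz_integral_parts {Q h : ℝ → ℝ} {K K' : ℝ≥0}
    (hQ : LipschitzWith K Q) (hh : LipschitzWith K' h) {s : ℝ} (hs : 0 ≤ s) :
    ∫ t in Set.Ioc 0 s, (deriv Q t * h t + Q t * deriv h t)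
      = Q s * h s - Q 0 * h 0 := by
  -- the product is Lipschitz on [-1, s+1]
  set MQ : ℝ := |Q 0| + K * (s + 2) with hMQ
  set Mh : ℝ := |h 0| + K' * (s + 2) with hMh
  have hQd : ∀ x y : ℝ, |Q x - Q y| ≤ K * |x - y| := fun x y => by
    simpa [Real.dist_eq] using hQ.dist_le_mul x y
  have hhd : ∀ x y : ℝ, |h x - h y| ≤ K' * |x - y| := fun x y => by
    simpa [Real.dist_eq] using hh.dist_le_mul x y
  have hQb : ∀ x ∈ Set.Icc (-1 : ℝ) (s+1), |Q x| ≤ MQ := by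
    intro x hx
    have h1 := hQd x 0
    have h2 : |x - 0| ≤ s + 2 := by
      rw [abs_le]; constructor <;> [linarith [hx.1]; linarith [hx.2]]
    have h3 : (K : ℝ) * |x - 0| ≤ K * (s + 2) :=
      mul_le_mul_of_nonneg_left h2 K.coe_nonneg
    calc |Q x| ≤ |Q x - Q 0| + |Q 0| := by
          have := abs_sub_abs_le_abs_sub (Q x) (Q 0); nlinarith [abs_nonneg (Q x - Q 0)]
      _ ≤ MQ := by rw [hMQ]; linarith
  have hhb : ∀ x ∈ Set.Icc (-1 : ℝ) (s+1), |h x| ≤ Mh := by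
    intro x hx
    have h1 := hhd x 0
    have h2 : |x - 0| ≤ s + 2 := by
      rw [abs_le]; constructor <;> [linarith [hx.1]; linarith [hx.2]]
    have h3 : (K' : ℝ) * |x - 0| ≤ K' * (s + 2) :=
      mul_le_mul_of_nonneg_left h2 K'.coe_nonneg
    calc |h x| ≤ |h x - h 0| + |h 0| := by
          have := abs_sub_abs_le_abs_sub (h x) (h 0); nlinarith [abs_nonneg (h x - h 0)]
      _ ≤ Mh := by rw [hMh]; linarith
  have hMQ0 : 0 ≤ MQ := le_trans (abs_nonneg _) (hQb 0 (by constructor <;> linarith))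
  have hMh0 : 0 ≤ Mh := le_trans (abs_nonneg _) (hhb 0 (by constructor <;> linarith))
  have hPlip : LipschitzOnWith (MQ * K' + Mh * K).toNNReal (fun t => Q t * h t)
      (Set.Icc (-1 : ℝ) (s+1)) := by
    refine LipschitzOnWith.of_dist_le_mul fun x hx y hy => ?_
    rw [Real.dist_eq, Real.dist_eq]
    have key : Q x * h x - Q y * h y = Q x * (h x - h y) + h y * (Q x - Q y) := by ring
    calc |Q x * h x - Q y * h y| ≤ |Q x| * |h x - h y| + |h y| * |Q x - Q y| := by
          rw [key]; refine le_trans (abs_add_le _ _) (by rw [abs_mul, abs_mul])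
      _ ≤ MQ * (K' * |x - y|) + Mh * (K * |x - y|) := by
          refine add_le_add (mul_le_mul (hQb x hx) (hhd x y) (abs_nonneg _) hMQ0) ?_
          exact mul_le_mul (hhb y hy) (hQd x y) (abs_nonneg _) hMh0
      _ ≤ (MQ * K' + Mh * K).toNNReal * |x - y| := by
          rw [Real.coe_toNNReal _ (by positivity)]; ring_nf; rfl
  have hftc : ∫ t in Set.Ioc 0 s, deriv (fun t => Q t * h t) t = Q s * h s - Q 0 * h 0 :=
    lipschitzOn_integral_deriv hPlip (by linarith) hs (by linarith)
  have hae : ∀ᵐ t, deriv (fun t => Q t * h t) t = deriv Q t * h t + Q t * deriv h t := by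
    filter_upwards [hQ.ae_differentiableAt_of_real, hh.ae_differentiableAt_of_real]
      with t h1 h2
    exact (h1.hasDerivAt.mul h2.hasDerivAt).deriv
  rw [← hftc]
  exact (integral_congr_ae (ae_restrict_of_ae hae)).symm

noncomputable def Jint (d ν : ℕ) (D : Fin d → ℝ → ℝ) (s : ℝ) (i : Fin ν → Fin d) : ℝ :=
  ∫ u in simplexSet ν s, ∏ j, D (i j) (u j)

lemma isClosed_simplexSet (ν : ℕ) (r : ℝ) : IsClosed (simplexSet ν r) := by
  have h1 : IsClosed {u : Fin ν → ℝ | ∀ j, 0 ≤ u j} := by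
    have : {u : Fin ν → ℝ | ∀ j, 0 ≤ u j} = ⋂ j, {u | 0 ≤ u j} := by ext u; simp
    rw [this]
    exact isClosed_iInter fun j => isClosed_le continuous_const (continuous_apply j)
  have h2 : IsClosed {u : Fin ν → ℝ | Monotone u} := by
    have : {u : Fin ν → ℝ | Monotone u} = ⋂ (j) (k) (_ : j ≤ k), {u | u j ≤ u k} := by
      ext u; simp [Monotone]
    rw [this]
    exact isClosed_iInter fun j => isClosed_iInter fun k => isClosed_iInter fun _ =>
      isClosed_le (continuous_apply j) (continuous_apply k)
  have h3 : IsClosed {u : Fin ν → ℝ | ∀ j, u j ≤ r} := by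
    have : {u : Fin ν → ℝ | ∀ j, u j ≤ r} = ⋂ j, {u | u j ≤ r} := by ext u; simp
    rw [this]
    exact isClosed_iInter fun j => isClosed_le (continuous_apply j) continuous_const
  have : simplexSet ν r = {u : Fin ν → ℝ | ∀ j, 0 ≤ u j} ∩
      ({u | Monotone u} ∩ {u | ∀ j, u j ≤ r}) := by
    ext u; simp [simplexSet, and_assoc]
  rw [this]; exact h1.inter (h2.inter h3)

lemma measurableSet_simplexSet (ν : ℕ) (r : ℝ) : MeasurableSet (simplexSet ν r) :=
  (isClosed_simplexSet ν r).measurableSet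

lemma simplexSet_subset_pi {ν : ℕ} {r : ℝ} (hr : 0 ≤ r) :
    simplexSet ν r ⊆ Set.pi Set.univ (fun _ : Fin ν => Set.Icc 0 r) := by
  intro u hu j _
  exact ⟨hu.1 j, hu.2.2 j⟩

lemma volume_simplexSet_le {ν : ℕ} {r : ℝ} (hr : 0 ≤ r) :
    volume (simplexSet ν r) ≤ ENNReal.ofReal r ^ ν := by
  refine le_trans (measure_mono (simplexSet_subset_pi hr)) ?_
  rw [volume_pi_pi]
  simp [Real.volume_Icc]

lemma volume_simplexSet_ne_top {ν : ℕ} (r : ℝ) : volume (simplexSet ν r) ≠ ⊤ := by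
  rcases le_or_gt 0 r with hr | hr
  · exact ne_top_of_le_ne_top (by simp) (volume_simplexSet_le hr)
  · rcases Nat.eq_zero_or_pos ν with hν | hν
    · subst hν
      have : volume (univ : Set (Fin 0 → ℝ)) = 1 := by
        rw [show (volume : Measure (Fin 0 → ℝ)) = Measure.pi (fun _ => volume) from rfl,
          Measure.pi_univ]
        simp
      exact ne_top_of_le_ne_top (by simp [this]) (measure_mono (subset_univ _))
    · have : simplexSet ν r = ∅ := by
        ext u; simp only [simplexSet, mem_setOf_eq, mem_empty_iff_false, iff_false]
        rintro ⟨h0, _, hr'⟩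
        exact absurd (le_trans (h0 ⟨0, hν⟩) (hr' ⟨0, hν⟩)) (not_le.2 hr)
      simp [this]

lemma measurable_prodD {d ν : ℕ} {D : Fin d → ℝ → ℝ} (hD : ∀ c, Measurable (D c))
    (i : Fin ν → Fin d) : Measurable (fun u : Fin ν → ℝ => ∏ j, D (i j) (u j)) :=
  Finset.measurable_prod _ fun j _ => (hD (i j)).comp (measurable_pi_apply j)

lemma abs_prodD_le {d ν : ℕ} {D : Fin d → ℝ → ℝ} (hDb : ∀ c x, |D c x| ≤ 1)
    (i : Fin ν → Fin d) (u : Fin ν → ℝ) : |∏ j, D (i j) (u j)| ≤ 1 := by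
  rw [Finset.abs_prod]
  exact Finset.prod_le_one (fun j _ => abs_nonneg _) (fun j _ => hDb _ _)

lemma integrableOn_prodD {d ν : ℕ} {D : Fin d → ℝ → ℝ} (hD : ∀ c, Measurable (D c))
    (hDb : ∀ c x, |D c x| ≤ 1) (i : Fin ν → Fin d) (s : ℝ) :
    IntegrableOn (fun u : Fin ν → ℝ => ∏ j, D (i j) (u j)) (simplexSet ν s) := by
  haveI : IsFiniteMeasure (volume.restrict (simplexSet ν s)) :=
    ⟨by rw [Measure.restrict_apply_univ]; exact lt_top_iff_ne_top.2 (volume_simplexSet_ne_top s)⟩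
  refine Integrable.mono' (integrable_const 1)
    ((measurable_prodD hD i).aestronglyMeasurable) ?_
  exact Filter.Eventually.of_forall fun u => by
    rw [Real.norm_eq_abs]; exact abs_prodD_le hDb i u

lemma abs_Jint_le {d ν : ℕ} {D : Fin d → ℝ → ℝ} (hD : ∀ c, Measurable (D c))
    (hDb : ∀ c x, |D c x| ≤ 1) (i : Fin ν → Fin d) {s : ℝ} (hs : 0 ≤ s) :
    |Jint d ν D s i| ≤ s ^ ν := by
  have h1 : |Jint d ν D s i| ≤ 1 * (volume (simplexSet ν s)).toReal := by
    rw [← Real.norm_eq_abs]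
    refine norm_setIntegral_le_of_norm_le_const
      (lt_top_iff_ne_top.2 (volume_simplexSet_ne_top s)) (fun u _ => ?_)
    · rw [Real.norm_eq_abs]; exact abs_prodD_le hDb i u
  rw [one_mul] at h1
  refine le_trans h1 ?_
  have h2 := volume_simplexSet_le (ν := ν) hs
  calc (volume (simplexSet ν s)).toReal ≤ (ENNReal.ofReal s ^ ν).toReal :=
        ENNReal.toReal_mono (by simp) h2
    _ = s ^ ν := by
        rw [ENNReal.toReal_pow, ENNReal.toReal_ofReal hs]

lemma Jint_zero (d : ℕ) (D : Fin d → ℝ → ℝ) (s : ℝ) (i : Fin 0 → Fin d) :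
    Jint d 0 D s i = 1 := by
  have h1 : simplexSet 0 s = univ := by
    ext u
    simp only [simplexSet, mem_setOf_eq, mem_univ, iff_true]
    refine ⟨fun j => absurd j.2 (by simp), fun a b h => ?_, fun j => absurd j.2 (by simp)⟩
    exact absurd a.2 (by simp)
  have h2 : volume (univ : Set (Fin 0 → ℝ)) = 1 := by
    rw [show (volume : Measure (Fin 0 → ℝ)) = Measure.pi (fun _ => volume) from rfl,
      Measure.pi_univ]
    simp
  simp [Jint, h1, h2, measureReal_def]

/-- membership of a `snoc` tuple in the simplex. -/
lemma snoc_mem_simplexSet_iff {ν : ℕ} {s t : ℝ} {v : Fin ν → ℝ} :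
    (Fin.snoc v t : Fin (ν+1) → ℝ) ∈ simplexSet (ν+1) s
      ↔ t ∈ Set.Icc 0 s ∧ v ∈ simplexSet ν t := by
  constructor
  · rintro ⟨h0, hmono, hle⟩
    have ht0 : 0 ≤ t := by simpa using h0 (Fin.last ν)
    have hts : t ≤ s := by simpa using hle (Fin.last ν)
    refine ⟨⟨ht0, hts⟩, fun j => by simpa using h0 j.castSucc, fun a b hab => ?_, fun j => ?_⟩
    · have := hmono (Fin.castSucc_le_castSucc_iff.2 hab)
      simpa using this
    · have := hmono (Fin.le_last j.castSucc)
      simpa using this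
  · rintro ⟨⟨ht0, hts⟩, hv0, hvmono, hvt⟩
    refine ⟨fun j => ?_, fun a b hab => ?_, fun j => ?_⟩
    · refine Fin.lastCases ?_ (fun j' => ?_) j <;> simp [ht0, hv0]
    · refine Fin.lastCases ?_ (fun b' hb' => ?_) b hab
      · intro _
        refine Fin.lastCases ?_ (fun a' => ?_) a <;> simp [hvt, le_trans (hvt _) le_rfl]
      · refine Fin.lastCases ?_ (fun a' ha' => ?_) a hb'
        · intro hba
          exact absurd (lt_of_le_of_lt hba (Fin.castSucc_lt_last b')) (lt_irrefl _)
        · simp only [Fin.snoc_castSucc]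
          exact hvmono (Fin.castSucc_le_castSucc_iff.1 ha')
    · refine Fin.lastCases ?_ (fun j' => ?_) j
      · simpa using hts
      · simp only [Fin.snoc_castSucc]
        exact le_trans (hvt j') hts

lemma Jint_succ (d ν : ℕ) (D : Fin d → ℝ → ℝ) (hD : ∀ c, Measurable (D c))
    (hDb : ∀ c x, |D c x| ≤ 1) (s : ℝ) (hs : 0 ≤ s) (i : Fin (ν+1) → Fin d) :
    Jint d (ν+1) D s i
      = ∫ t in Set.Icc 0 s, D (i (Fin.last ν)) t * Jint d ν D t (i ∘ Fin.castSucc) := by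
  classical
  set e := MeasurableEquiv.piFinSuccAbove (fun _ : Fin (ν+1) => ℝ) (Fin.last ν) with he
  have hsymm : ∀ p : ℝ × (Fin ν → ℝ), e.symm p = Fin.snoc p.2 p.1 := by
    intro p
    simp [he, MeasurableEquiv.piFinSuccAbove, Fin.insertNthEquiv, Fin.insertNth_last']
  set S' : Set (ℝ × (Fin ν → ℝ)) :=
    {p | p.1 ∈ Set.Icc 0 s ∧ p.2 ∈ simplexSet ν p.1} with hS'
  have hpre : e.symm ⁻¹' (simplexSet (ν+1) s) = S' := by
    ext p
    rw [Set.mem_preimage, hsymm p]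
    exact snoc_mem_simplexSet_iff
  have hS'meas : MeasurableSet S' := by
    have m1 : MeasurableSet {p : ℝ × (Fin ν → ℝ) | p.1 ∈ Set.Icc 0 s} :=
      measurable_fst measurableSet_Icc
    have m2 : MeasurableSet {p : ℝ × (Fin ν → ℝ) | ∀ j, 0 ≤ p.2 j} := by
      have : {p : ℝ × (Fin ν → ℝ) | ∀ j, 0 ≤ p.2 j} = ⋂ j, {p | 0 ≤ p.2 j} := by ext p; simp
      rw [this]
      exact MeasurableSet.iInter fun j =>
        measurableSet_le measurable_const (measurable_snd.eval (a := j))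
    have m3 : MeasurableSet {p : ℝ × (Fin ν → ℝ) | Monotone p.2} := by
      have : {p : ℝ × (Fin ν → ℝ) | Monotone p.2}
          = ⋂ (a) (b) (_ : a ≤ b), {p | p.2 a ≤ p.2 b} := by
        ext p; simp [Monotone]
      rw [this]
      exact MeasurableSet.iInter fun a => MeasurableSet.iInter fun b =>
        MeasurableSet.iInter fun _ => measurableSet_le
          (measurable_snd.eval (a := a))
          (measurable_snd.eval (a := b))
    have m4 : MeasurableSet {p : ℝ × (Fin ν → ℝ) | ∀ j, p.2 j ≤ p.1} := by
      have : {p : ℝ × (Fin ν → ℝ) | ∀ j, p.2 j ≤ p.1} = ⋂ j, {p | p.2 j ≤ p.1} := by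
        ext p; simp
      rw [this]
      exact MeasurableSet.iInter fun j =>
        measurableSet_le (measurable_snd.eval (a := j)) measurable_fst
    have : S' = {p : ℝ × (Fin ν → ℝ) | p.1 ∈ Set.Icc 0 s}
        ∩ ({p | ∀ j, 0 ≤ p.2 j} ∩ ({p | Monotone p.2} ∩ {p | ∀ j, p.2 j ≤ p.1})) := by
      ext p
      simp only [hS', simplexSet, Set.mem_inter_iff, Set.mem_setOf_eq]
      try tauto
    rw [this]
    exact m1.inter (m2.inter (m3.inter m4))
  -- transfer via the measure-preserving equivalence
  set G : ℝ × (Fin ν → ℝ) → ℝ :=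
    fun p => D (i (Fin.last ν)) p.1 * ∏ j, D (i j.castSucc) (p.2 j) with hG
  have hFsymm : ∀ p : ℝ × (Fin ν → ℝ),
      (∏ j, D (i j) ((e.symm p) j)) = G p := by
    intro p
    rw [hsymm p, Fin.prod_univ_castSucc]
    simp [hG, mul_comm]
  have hmp : MeasurePreserving (e.symm) volume volume :=
    (volume_preserving_piFinSuccAbove (fun _ : Fin (ν+1) => ℝ) (Fin.last ν)).symm _
  have step1 : Jint d (ν+1) D s i = ∫ p in S', G p ∂(volume : Measure (ℝ × (Fin ν → ℝ))) := by
    rw [Jint, ← hmp.setIntegral_preimage_emb e.symm.measurableEmbedding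
      (fun u => ∏ j, D (i j) (u j)) (simplexSet (ν+1) s), hpre]
    exact setIntegral_congr_fun hS'meas fun p _ => hFsymm p
  -- G is integrable on S'
  have hGmeas : Measurable G := by
    refine ((hD _).comp measurable_fst).mul ?_
    exact Finset.measurable_prod _ fun j _ =>
      (hD _).comp (measurable_snd.eval (a := j))
  have hGbd : ∀ p, |G p| ≤ 1 := by
    intro p
    rw [hG, abs_mul]
    have h1 := hDb (i (Fin.last ν)) p.1
    have h2 := abs_prodD_le hDb (i ∘ Fin.castSucc) p.2
    simp only [Function.comp] at h2
    exact mul_le_one₀ h1 (abs_nonneg _) h2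
  have hS'sub : S' ⊆ (Set.Icc (0:ℝ) s) ×ˢ (Set.pi Set.univ fun _ : Fin ν => Set.Icc (0:ℝ) s) := by
    rintro ⟨t, v⟩ ⟨ht, hv⟩
    exact ⟨ht, fun j _ => ⟨hv.1 j, le_trans (hv.2.2 j) ht.2⟩⟩
  have hS'vol : volume S' ≠ ⊤ := by
    refine ne_top_of_le_ne_top ?_ (measure_mono hS'sub)
    rw [show (volume : Measure (ℝ × (Fin ν → ℝ))) = Measure.prod volume volume from rfl,
      Measure.prod_prod]
    exact ENNReal.mul_ne_top (by simp) (by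
      rw [volume_pi_pi]; simp)
  have hGint : IntegrableOn G S' (volume : Measure (ℝ × (Fin ν → ℝ))) := by
    haveI : IsFiniteMeasure ((volume : Measure (ℝ × (Fin ν → ℝ))).restrict S') :=
      ⟨by rw [Measure.restrict_apply_univ]; exact lt_top_iff_ne_top.2 hS'vol⟩
    refine Integrable.mono' (integrable_const 1) hGmeas.aestronglyMeasurable.restrict ?_
    exact Filter.Eventually.of_forall fun p => by rw [Real.norm_eq_abs]; exact hGbd p
  -- apply Fubini
  have hindint : Integrable (S'.indicator G) (volume : Measure (ℝ × (Fin ν → ℝ))) :=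
    (integrable_indicator_iff hS'meas).2 hGint
  have step2 : ∫ p in S', G p ∂(volume : Measure (ℝ × (Fin ν → ℝ)))
      = ∫ t : ℝ, ∫ v : Fin ν → ℝ, S'.indicator G (t, v) := by
    rw [← integral_indicator hS'meas]
    rw [show (volume : Measure (ℝ × (Fin ν → ℝ))) = Measure.prod volume volume from rfl]
      at hindint ⊢
    exact integral_prod _ hindint
  -- pointwise evaluation of the inner integral
  have step3 : ∀ t : ℝ, (∫ v : Fin ν → ℝ, S'.indicator G (t, v))
      = (Set.Icc 0 s).indicator
          (fun t => D (i (Fin.last ν)) t * Jint d ν D t (i ∘ Fin.castSucc)) t := by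
    intro t
    by_cases ht : t ∈ Set.Icc (0:ℝ) s
    · have hind : ∀ v : Fin ν → ℝ, S'.indicator G (t, v)
          = (simplexSet ν t).indicator (fun v => G (t, v)) v := by
        intro v
        by_cases hv : v ∈ simplexSet ν t
        · rw [Set.indicator_of_mem (by exact ⟨ht, hv⟩), Set.indicator_of_mem hv]
        · rw [Set.indicator_of_notMem (fun hmem => hv hmem.2),
            Set.indicator_of_notMem hv]
      rw [Set.indicator_of_mem ht]
      calc (∫ v : Fin ν → ℝ, S'.indicator G (t, v))
          = ∫ v : Fin ν → ℝ, (simplexSet ν t).indicator (fun v => G (t, v)) v :=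
            integral_congr_ae (Filter.Eventually.of_forall hind)
        _ = ∫ v in simplexSet ν t, G (t, v) := integral_indicator (measurableSet_simplexSet ν t)
        _ = D (i (Fin.last ν)) t * Jint d ν D t (i ∘ Fin.castSucc) := by
            rw [hG, Jint]
            simp only []
            rw [integral_const_mul]
            rfl
    · rw [Set.indicator_of_notMem ht]
      have : ∀ v : Fin ν → ℝ, S'.indicator G (t, v) = 0 := fun v =>
        Set.indicator_of_notMem (fun hmem => ht hmem.1) _
      simp [this]
  rw [step1, step2]
  calc (∫ t : ℝ, ∫ v : Fin ν → ℝ, S'.indicator G (t, v))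
      = ∫ t : ℝ, (Set.Icc 0 s).indicator
          (fun t => D (i (Fin.last ν)) t * Jint d ν D t (i ∘ Fin.castSucc)) t :=
        integral_congr_ae (Filter.Eventually.of_forall step3)
    _ = _ := integral_indicator measurableSet_Icc

/-- common integrability fact for the recursion integrand -/
lemma integrableOn_recursion_integrand {d ν : ℕ} {D : Fin d → ℝ → ℝ}
    (hD : ∀ c, Measurable (D c)) (hDb : ∀ c x, |D c x| ≤ 1) (c : Fin d)
    (i' : Fin ν → Fin d) {T a b : ℝ} (hJc : ContinuousOn (fun t => Jint d ν D t i') (Set.Icc 0 T))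
    (ha : 0 ≤ a) (hab : a ≤ b) (hbT : b ≤ T) :
    IntegrableOn (fun t => D c t * Jint d ν D t i') (Set.Ioc a b) := by
  have hsub : Set.Ioc a b ⊆ Set.Icc 0 T := fun t ht =>
    ⟨le_trans ha (le_of_lt ht.1), le_trans ht.2 hbT⟩
  refine integrableOn_of_bdd (by simp) ?_ (C := (max T 1) ^ ν) ?_
  · refine AEStronglyMeasurable.mul ((hD c).aestronglyMeasurable.restrict) ?_
    exact (hJc.mono hsub).aestronglyMeasurable measurableSet_Ioc
  · rw [ae_restrict_iff' measurableSet_Ioc]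
    refine Filter.Eventually.of_forall fun t ht => ?_
    have ht' := hsub ht
    rw [abs_mul]
    have h1 : |Jint d ν D t i'| ≤ (max T 1) ^ ν := by
      refine le_trans (abs_Jint_le hD hDb i' ht'.1) ?_
      exact pow_le_pow_left₀ ht'.1 (le_trans ht'.2 (le_max_left T 1)) ν
    calc |D c t| * |Jint d ν D t i'| ≤ 1 * ((max T 1) ^ ν) :=
          mul_le_mul (hDb c t) h1 (abs_nonneg _) zero_le_one
      _ = (max T 1) ^ ν := one_mul _

lemma Jint_lipschitzOn {T : ℝ} (hT : 0 ≤ T) :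
    ∀ (ν d : ℕ) (D : Fin d → ℝ → ℝ), (∀ c, Measurable (D c)) → (∀ c x, |D c x| ≤ 1) →
    ∀ (i : Fin ν → Fin d),
    LipschitzOnWith ((max T 1) ^ ν).toNNReal (fun t => Jint d ν D t i) (Set.Icc 0 T) := by
  intro ν
  induction ν with
  | zero =>
    intro d D hD hDb i
    refine LipschitzOnWith.of_dist_le_mul fun x _ y _ => ?_
    rw [Jint_zero, Jint_zero]
    simp [dist_self]
  | succ ν ih =>
    intro d D hD hDb i
    have hJc : ContinuousOn (fun t => Jint d ν D t (i ∘ Fin.castSucc)) (Set.Icc 0 T) :=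
      (ih d D hD hDb (i ∘ Fin.castSucc)).continuousOn
    have key : ∀ x y, x ∈ Set.Icc 0 T → y ∈ Set.Icc 0 T → y ≤ x →
        |Jint d (ν+1) D x i - Jint d (ν+1) D y i| ≤ (max T 1) ^ ν * (x - y) := by
      intro x y hx hy hyx
      rw [Jint_succ d ν D hD hDb x hx.1 i, Jint_succ d ν D hD hDb y hy.1 i,
        integral_Icc_eq_integral_Ioc, integral_Icc_eq_integral_Ioc]
      have hsplit : Set.Ioc (0:ℝ) x = Set.Ioc 0 y ∪ Set.Ioc y x := by
        rw [Set.Ioc_union_Ioc_eq_Ioc hy.1 hyx]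
      have hdisj : Disjoint (Set.Ioc (0:ℝ) y) (Set.Ioc y x) := Set.Ioc_disjoint_Ioc_of_le le_rfl
      have hint1 := integrableOn_recursion_integrand hD hDb (i (Fin.last ν))
        (i ∘ Fin.castSucc) hJc le_rfl hy.1 hy.2
      have hint2 := integrableOn_recursion_integrand hD hDb (i (Fin.last ν))
        (i ∘ Fin.castSucc) hJc hy.1 hyx hx.2
      rw [hsplit, setIntegral_union hdisj measurableSet_Ioc hint1 hint2]
      rw [add_sub_cancel_left]
      rw [← Real.norm_eq_abs]
      refine le_trans (norm_setIntegral_le_of_norm_le_const (C := (max T 1) ^ ν)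
        (by simp) (fun t ht => ?_)) ?_
      · rw [Real.norm_eq_abs, abs_mul]
        have ht0 : 0 ≤ t := le_trans hy.1 (le_of_lt ht.1)
        have htT : t ≤ T := le_trans ht.2 hx.2
        have h1 : |Jint d ν D t (i ∘ Fin.castSucc)| ≤ (max T 1) ^ ν := by
          refine le_trans (abs_Jint_le hD hDb _ ht0) ?_
          exact pow_le_pow_left₀ ht0 (le_trans htT (le_max_left T 1)) ν
        calc |D (i (Fin.last ν)) t| * |Jint d ν D t (i ∘ Fin.castSucc)|
            ≤ 1 * ((max T 1) ^ ν) := mul_le_mul (hDb _ _) h1 (abs_nonneg _) zero_le_one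
          _ = (max T 1) ^ ν := one_mul _
      · rw [measureReal_def, Real.volume_Ioc, ENNReal.toReal_ofReal (by linarith)]
    refine LipschitzOnWith.of_dist_le_mul fun x hx y hy => ?_
    rw [Real.dist_eq, Real.dist_eq, Real.coe_toNNReal _ (by positivity)]
    rcases le_total y x with h | h
    · refine le_trans (key x y hx hy h) ?_
      rw [abs_of_nonneg (by linarith)]
      calc (max T 1) ^ ν * (x - y) ≤ ((max T 1) ^ ν * max T 1) * (x - y) :=
            mul_le_mul_of_nonneg_right (le_mul_of_one_le_right
              (pow_nonneg (le_trans zero_le_one (le_max_right T 1)) ν) (le_max_right T 1))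
              (by linarith)
        _ = (max T 1) ^ (ν + 1) * (x - y) := by ring
    · rw [abs_sub_comm (Jint d (ν+1) D x i) _, abs_sub_comm x y]
      refine le_trans (key y x hy hx h) ?_
      rw [abs_of_nonneg (by linarith)]
      calc (max T 1) ^ ν * (y - x) ≤ ((max T 1) ^ ν * max T 1) * (y - x) :=
            mul_le_mul_of_nonneg_right (le_mul_of_one_le_right
              (pow_nonneg (le_trans zero_le_one (le_max_right T 1)) ν) (le_max_right T 1))
              (by linarith)
        _ = (max T 1) ^ (ν + 1) * (y - x) := by ring

lemma abs_deriv_le_one {f : ℝ → ℝ} (hf : LipschitzWith 1 f) (x : ℝ) : |deriv f x| ≤ 1 := by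
  simpa using abs_deriv_le_of_lipschitz hf x

lemma Jint_key {T : ℝ} (hT : 0 ≤ T) (d : ℕ) (ν : ℕ) :
    ∃ C : ℝ, 0 ≤ C ∧
      ∀ (F G : Fin d → ℝ → ℝ), (∀ c, LipschitzWith 1 (F c)) → (∀ c, LipschitzWith 1 (G c)) →
      (∀ c, F c 0 = G c 0) →
      ∀ {ε : ℝ}, 0 ≤ ε → (∀ c, ∀ t ∈ Set.Icc (0:ℝ) T, |F c t - G c t| ≤ ε) →
      ∀ {s : ℝ}, s ∈ Set.Icc (0:ℝ) T → ∀ (i : Fin ν → Fin d),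
      |Jint d ν (fun c => deriv (F c)) s i - Jint d ν (fun c => deriv (G c)) s i| ≤ C * ε := by
  induction ν with
  | zero =>
    exact ⟨0, le_rfl, fun F G _ _ _ _ _ _ _ _ i => by rw [Jint_zero, Jint_zero]; simp⟩
  | succ ν ih =>
    obtain ⟨C, hC0, hC⟩ := ih
    set B : ℝ := (max T 1) ^ ν with hB
    have hB0 : 0 ≤ B := pow_nonneg (le_trans zero_le_one (le_max_right T 1)) ν
    refine ⟨T * C + B + B * T, by positivity, ?_⟩
    intro F G hF hG h0 ε hε hclose s hsmem i
    obtain ⟨hs, hsT⟩ := hsmem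
    set DF : Fin d → ℝ → ℝ := fun c => deriv (F c) with hDF
    set DG : Fin d → ℝ → ℝ := fun c => deriv (G c) with hDG
    have hDFm : ∀ c, Measurable (DF c) := fun c => measurable_deriv _
    have hDGm : ∀ c, Measurable (DG c) := fun c => measurable_deriv _
    have hDFb : ∀ c x, |DF c x| ≤ 1 := fun c x => abs_deriv_le_one (hF c) x
    have hDGb : ∀ c x, |DG c x| ≤ 1 := fun c x => abs_deriv_le_one (hG c) x
    set il : Fin d := i (Fin.last ν) with hil
    set i' : Fin ν → Fin d := i ∘ Fin.castSucc with hi'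
    set qf : ℝ → ℝ := fun t => Jint d ν DF t i' with hqf
    set q : ℝ → ℝ := fun t => Jint d ν DG t i' with hq
    have hqfL := Jint_lipschitzOn hT ν d DF hDFm hDFb i'
    have hqL := Jint_lipschitzOn hT ν d DG hDGm hDGb i'
    have hqfc : ContinuousOn qf (Set.Icc 0 T) := hqfL.continuousOn
    have hqc : ContinuousOn q (Set.Icc 0 T) := hqL.continuousOn
    have hIoc_sub : Set.Ioc (0:ℝ) s ⊆ Set.Icc 0 T := fun t ht =>
      ⟨le_of_lt ht.1, le_trans ht.2 hsT⟩
    -- rewrite both sides via the recursion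
    have eF : Jint d (ν+1) DF s i = ∫ t in Set.Ioc 0 s, DF il t * qf t := by
      rw [Jint_succ d ν DF hDFm hDFb s hs i, integral_Icc_eq_integral_Ioc]
    have eG : Jint d (ν+1) DG s i = ∫ t in Set.Ioc 0 s, DG il t * q t := by
      rw [Jint_succ d ν DG hDGm hDGb s hs i, integral_Icc_eq_integral_Ioc]
    have I1 : IntegrableOn (fun t => DF il t * qf t) (Set.Ioc 0 s) :=
      integrableOn_recursion_integrand hDFm hDFb il i' hqfc le_rfl hs hsT
    have I2 : IntegrableOn (fun t => DG il t * q t) (Set.Ioc 0 s) :=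
      integrableOn_recursion_integrand hDGm hDGb il i' hqc le_rfl hs hsT
    -- the two pieces
    set X : ℝ → ℝ := fun t => (qf t - q t) * DF il t with hX
    set Y : ℝ → ℝ := fun t => q t * (DF il t - DG il t) with hY
    have hXmeas : AEStronglyMeasurable X (volume.restrict (Set.Ioc 0 s)) := by
      refine AEStronglyMeasurable.mul ?_ ((hDFm il).aestronglyMeasurable.restrict)
      exact AEStronglyMeasurable.sub
        ((hqfc.mono hIoc_sub).aestronglyMeasurable measurableSet_Ioc)
        ((hqc.mono hIoc_sub).aestronglyMeasurable measurableSet_Ioc)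
    have hXbd : ∀ t ∈ Set.Ioc (0:ℝ) s, |X t| ≤ C * ε := by
      intro t ht
      rw [hX, abs_mul]
      have h1 : |qf t - q t| ≤ C * ε := hC F G hF hG h0 hε hclose (hIoc_sub ht) i'
      calc |qf t - q t| * |DF il t| ≤ (C * ε) * 1 :=
            mul_le_mul h1 (hDFb il t) (abs_nonneg _) (by positivity)
        _ = C * ε := mul_one _
    have hXint : IntegrableOn X (Set.Ioc 0 s) := by
      refine integrableOn_of_bdd (by simp) hXmeas (C := C * ε) ?_
      rw [ae_restrict_iff' measurableSet_Ioc]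
      exact Filter.Eventually.of_forall hXbd
    have hYint : IntegrableOn Y (Set.Ioc 0 s) := by
      refine integrableOn_of_bdd (by simp) ?_ (C := B * 2) ?_
      · refine AEStronglyMeasurable.mul ((hqc.mono hIoc_sub).aestronglyMeasurable measurableSet_Ioc) ?_
        exact ((hDFm il).sub (hDGm il)).aestronglyMeasurable.restrict
      · rw [ae_restrict_iff' measurableSet_Ioc]
        refine Filter.Eventually.of_forall fun t ht => ?_
        rw [hY, abs_mul]
        have h1 : |q t| ≤ B := by
          refine le_trans (abs_Jint_le hDGm hDGb i' (le_of_lt ht.1)) ?_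
          exact pow_le_pow_left₀ (le_of_lt ht.1)
            (le_trans (le_trans ht.2 hsT) (le_max_left T 1)) ν
        have h2 : |DF il t - DG il t| ≤ 2 := by
          calc |DF il t - DG il t| ≤ |DF il t| + |DG il t| := abs_sub _ _
            _ ≤ 1 + 1 := add_le_add (hDFb il t) (hDGb il t)
            _ = 2 := by norm_num
        exact mul_le_mul h1 h2 (abs_nonneg _) hB0
    have hsplit : Jint d (ν+1) DF s i - Jint d (ν+1) DG s i
        = (∫ t in Set.Ioc 0 s, X t) + ∫ t in Set.Ioc 0 s, Y t := by
      rw [eF, eG, ← integral_sub I1 I2, ← integral_add hXint hYint]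
      refine integral_congr_ae (Filter.Eventually.of_forall fun t => ?_)
      rw [hX, hY]; ring
    -- Term 1
    have hT1 : |∫ t in Set.Ioc 0 s, X t| ≤ C * ε * s := by
      rw [← Real.norm_eq_abs]
      refine le_trans (norm_setIntegral_le_of_norm_le_const (C := C * ε) (by simp)
        (fun t ht => by rw [Real.norm_eq_abs]; exact hXbd t ht)) ?_
      rw [measureReal_def, Real.volume_Ioc, ENNReal.toReal_ofReal (by linarith)]
      simp [mul_comm]
    -- Term 2 : integration by parts
    obtain ⟨Q, hQlip, hQeq⟩ := hqL.extend_real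
    set h : ℝ → ℝ := fun t => F il t - G il t with hh
    have hhlip : LipschitzWith 2 h := by
      have := (hF il).sub (hG il)
      norm_num at this
      exact this
    have hYeq : (∫ t in Set.Ioc 0 s, Y t) = ∫ t in Set.Ioc 0 s, Q t * deriv h t := by
      have e1 : (∫ t in Set.Ioc 0 s, Y t) = ∫ t in Set.Ioc 0 s, Q t * (DF il t - DG il t) :=
        setIntegral_congr_fun measurableSet_Ioc fun t ht =>
          congrArg (fun z => z * (DF il t - DG il t)) (hQeq (hIoc_sub ht))
      rw [e1]
      refine integral_congr_ae (ae_restrict_of_ae ?_)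
      filter_upwards [(hF il).ae_differentiableAt_of_real,
        (hG il).ae_differentiableAt_of_real] with t h1 h2
      rw [hh]
      rw [deriv_fun_sub h1 h2]
    have hQd : ∀ x, |deriv Q x| ≤ B := by
      intro x
      refine le_trans (abs_deriv_le_of_lipschitz hQlip x) ?_
      rw [Real.coe_toNNReal _ (by positivity)]
    have hQbd : ∀ t ∈ Set.Icc (0:ℝ) T, |Q t| ≤ B := by
      intro t ht
      rw [← hQeq ht]
      refine le_trans (abs_Jint_le hDGm hDGb i' ht.1) ?_
      exact pow_le_pow_left₀ ht.1 (le_trans ht.2 (le_max_left T 1)) ν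
    have hhbd : ∀ t ∈ Set.Icc (0:ℝ) T, |h t| ≤ ε := fun t ht => hclose il t ht
    have Ia : IntegrableOn (fun t => deriv Q t * h t) (Set.Ioc 0 s) := by
      refine integrableOn_of_bdd (by simp) ?_ (C := B * ε) ?_
      · exact ((measurable_deriv Q).aestronglyMeasurable.restrict).mul
          (hhlip.continuous.aestronglyMeasurable.restrict)
      · rw [ae_restrict_iff' measurableSet_Ioc]
        refine Filter.Eventually.of_forall fun t ht => ?_
        rw [abs_mul]
        exact mul_le_mul (hQd t) (hhbd t (hIoc_sub ht)) (abs_nonneg _) hB0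
    have Ib : IntegrableOn (fun t => Q t * deriv h t) (Set.Ioc 0 s) := by
      refine integrableOn_of_bdd (by simp) ?_ (C := B * 2) ?_
      · exact (hQlip.continuous.aestronglyMeasurable.restrict).mul
          ((measurable_deriv h).aestronglyMeasurable.restrict)
      · rw [ae_restrict_iff' measurableSet_Ioc]
        refine Filter.Eventually.of_forall fun t ht => ?_
        rw [abs_mul]
        have h2 : |deriv h t| ≤ 2 := by simpa using abs_deriv_le_of_lipschitz hhlip t
        exact mul_le_mul (hQbd t (hIoc_sub ht)) h2 (abs_nonneg _) hB0
    have hparts := lipschitz_integral_parts hQlip hhlip hs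
    have hsum : (∫ t in Set.Ioc 0 s, deriv Q t * h t) + (∫ t in Set.Ioc 0 s, Q t * deriv h t)
        = Q s * h s - Q 0 * h 0 := by
      rw [← integral_add Ia Ib]; exact hparts
    have hh0 : h 0 = 0 := by rw [hh]; simp [h0 il]
    have hT2 : |∫ t in Set.Ioc 0 s, Y t| ≤ B * ε + B * ε * s := by
      rw [hYeq]
      have e2 : (∫ t in Set.Ioc 0 s, Q t * deriv h t)
          = Q s * h s - ∫ t in Set.Ioc 0 s, deriv Q t * h t := by
        rw [hh0] at hsum; rw [mul_zero, sub_zero] at hsum; linarith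
      rw [e2]
      have b1 : |Q s * h s| ≤ B * ε := by
        rw [abs_mul]
        exact mul_le_mul (hQbd s ⟨hs, hsT⟩) (hhbd s ⟨hs, hsT⟩) (abs_nonneg _) hB0
      have b2 : |∫ t in Set.Ioc 0 s, deriv Q t * h t| ≤ B * ε * s := by
        rw [← Real.norm_eq_abs]
        refine le_trans (norm_setIntegral_le_of_norm_le_const (C := B * ε) (by simp)
          (fun t ht => ?_)) ?_
        · rw [Real.norm_eq_abs, abs_mul]
          exact mul_le_mul (hQd t) (hhbd t (hIoc_sub ht)) (abs_nonneg _) hB0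
        · rw [measureReal_def, Real.volume_Ioc, ENNReal.toReal_ofReal (by linarith)]
          simp [mul_comm]
      calc |Q s * h s - ∫ t in Set.Ioc 0 s, deriv Q t * h t|
          ≤ |Q s * h s| + |∫ t in Set.Ioc 0 s, deriv Q t * h t| := abs_sub _ _
        _ ≤ B * ε + B * ε * s := add_le_add b1 b2
    -- combine
    rw [hsplit]
    have hCε : 0 ≤ C * ε := by positivity
    have hBε : 0 ≤ B * ε := by positivity
    calc |(∫ t in Set.Ioc 0 s, X t) + ∫ t in Set.Ioc 0 s, Y t|
        ≤ |∫ t in Set.Ioc 0 s, X t| + |∫ t in Set.Ioc 0 s, Y t| := abs_add_le _ _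
      _ ≤ C * ε * s + (B * ε + B * ε * s) := add_le_add hT1 hT2
      _ ≤ C * ε * T + (B * ε + B * ε * T) := by
          refine add_le_add (mul_le_mul_of_nonneg_left hsT hCε) ?_
          exact add_le_add le_rfl (mul_le_mul_of_nonneg_left hsT hBε)
      _ = (T * C + B + B * T) * ε := by ring

/-- extensions of the coordinates of an `H`-path. -/
lemma HPath.exists_extension {d : ℕ} {T : ℝ} (hT : 0 < T) {γ : ℝ → Fin d → ℝ}
    (hγ : HPath d T γ) :
    ∃ E : Fin d → ℝ → ℝ, (∀ c, LipschitzWith 1 (E c)) ∧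
      (∀ c, ∀ t ∈ Set.Icc (0:ℝ) T, E c t = γ t c) ∧ (∀ c, E c 0 = 0) := by
  have hcoord : ∀ c : Fin d, LipschitzOnWith 1 (fun t => γ t c) (Set.Icc 0 T) := by
    intro c
    refine LipschitzOnWith.of_dist_le_mul fun x hx y hy => ?_
    calc dist (γ x c) (γ y c) ≤ dist (γ x) (γ y) := dist_le_pi_dist (γ x) (γ y) c
      _ ≤ 1 * dist x y := by
          simpa using ((hγ.2.dist_le_mul) x hx y hy)
  choose E hE hEeq using fun c => (hcoord c).extend_real
  refine ⟨E, hE, fun c t ht => (hEeq c ht).symm, fun c => ?_⟩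
  have h1 := hEeq c (Set.mem_Icc.2 ⟨le_rfl, le_of_lt hT⟩)
  have h2 : γ 0 c = 0 := by rw [hγ.1]; rfl
  rw [← h1]
  exact h2

lemma Phi_eq_Jint {d ν : ℕ} {T : ℝ} (hT : 0 < T) (γ : ℝ → Fin d → ℝ)
    (E : Fin d → ℝ → ℝ) (hEeq : ∀ c, ∀ t ∈ Set.Icc (0:ℝ) T, E c t = γ t c)
    {s : ℝ} (hs : s ∈ Set.Icc (0:ℝ) T) (i : Fin ν → Fin d) :
    Phi d ν γ s i = Jint d ν (fun c => deriv (E c)) s i := by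
  rw [Phi, Jint]
  refine setIntegral_congr_ae (measurableSet_simplexSet ν s) ?_
  set N : Set (Fin ν → ℝ) := ⋃ j : Fin ν, ({u | u j = 0} ∪ {u | u j = T}) with hN
  have hNnull : volume N = 0 := by
    have hyp : ∀ (x : ℝ) (j : Fin ν), volume {u : Fin ν → ℝ | u j = x} = 0 := by
      intro x j
      have := Measure.pi_hyperplane (fun _ : Fin ν => (volume : Measure ℝ)) j x
      simpa [MeasureTheory.volume_pi] using this
    exact measure_iUnion_null fun j => measure_union_null (hyp 0 j) (hyp T j)
  have hae : ∀ᵐ u : Fin ν → ℝ, u ∉ N := measure_eq_zero_iff_ae_notMem.mp hNnull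
  filter_upwards [hae] with u hu hmem
  refine Finset.prod_congr rfl fun j _ => ?_
  have h1 : 0 ≤ u j := hmem.1 j
  have h2 : u j ≤ T := le_trans (hmem.2.2 j) hs.2
  have h3 : u j ≠ 0 ∧ u j ≠ T := by
    constructor <;> intro hc <;> exact hu (Set.mem_iUnion.2 ⟨j, by simp [hc]⟩)
  have h4 : u j ∈ Set.Ioo (0:ℝ) T :=
    ⟨lt_of_le_of_ne h1 (Ne.symm h3.1), lt_of_le_of_ne h2 h3.2⟩
  refine Filter.EventuallyEq.deriv_eq ?_
  refine Filter.eventuallyEq_of_mem (Ioo_mem_nhds h4.1 h4.2) fun y hy => ?_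
  exact (hEeq (i j) y (Ioo_subset_Icc_self hy)).symm



/-- `Φ^(ν) : H → C([0,T]; ℝ^{d^ν})` is continuous with respect to the
supremum norms: if `γ_m ∈ H` converge uniformly on `[0,T]` to `γ ∈ H`, then
`Φ^(ν)(γ_m) → Φ^(ν)(γ)` uniformly on `[0,T]`. -/
theorem Phi_continuous (d ν : ℕ) (T : ℝ) (hT : 0 < T)
    (γm : ℕ → ℝ → Fin d → ℝ) (γ : ℝ → Fin d → ℝ)
    (hm : ∀ m, HPath d T (γm m)) (hγ : HPath d T γ)
    (hconv : TendstoUniformlyOn γm γ atTop (Set.Icc 0 T)) :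
    TendstoUniformlyOn (fun m t => Phi d ν (γm m) t) (fun t => Phi d ν γ t)
      atTop (Set.Icc 0 T) := by
  rw [Metric.tendstoUniformlyOn_iff] at hconv ⊢
  intro ε hε
  obtain ⟨C, hC0, hC⟩ := Jint_key (le_of_lt hT) d ν
  set δ : ℝ := ε / (2 * (C + 1)) with hδ
  have hδpos : 0 < δ := by positivity
  filter_upwards [hconv δ hδpos] with m hmconv t ht
  obtain ⟨E, hElip, hEeq, hE0⟩ := hγ.exists_extension hT
  obtain ⟨Em, hEmlip, hEmeq, hEm0⟩ := (hm m).exists_extension hT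
  have hclose : ∀ c, ∀ x ∈ Set.Icc (0:ℝ) T, |E c x - Em c x| ≤ δ := by
    intro c x hx
    rw [hEeq c x hx, hEmeq c x hx, ← Real.dist_eq]
    exact le_of_lt (lt_of_le_of_lt (dist_le_pi_dist (γ x) (γm m x) c) (hmconv x hx))
  have h0 : ∀ c, E c 0 = Em c 0 := fun c => by rw [hE0 c, hEm0 c]
  have hkey := hC E Em hElip hEmlip h0 (le_of_lt hδpos) hclose ht
  rw [dist_pi_lt_iff hε]
  intro i
  rw [Real.dist_eq, Phi_eq_Jint hT γ E hEeq ht i, Phi_eq_Jint hT (γm m) Em hEmeq ht i]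
  refine lt_of_le_of_lt (hkey i) ?_
  calc C * δ ≤ (C + 1) * δ := by nlinarith
    _ = ε * ((C + 1) / (2 * (C + 1))) := by rw [hδ]; ring
    _ < ε := by
        have : (C + 1) / (2 * (C + 1)) = 1 / 2 := by
          rw [div_eq_div_iff (by positivity) (by positivity)]; ring
        rw [this]; linarith
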